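/- arXiv:2405.11590 — 2 statements merged into one kernel-verified Lean document; each statement's English description precedes it below -/
import Mathlib

section
/- Let ε ∈ (0, 1), λ > 0, and let f : ℝ^{d×r} → ℝ be differentiable. For every x ∈ St(d,r)^ε, the landing field satisfies ‖Λ(x)‖_F² ≥ ‖grad f(x)‖_F² + λ²(1−ε)²‖xᵀx − I_r‖_F². -/
open Matrix BigOperators Finset

noncomputable section

namespace DRFGT

/-- Frobenius inner product `⟨A, B⟩ = Tr (A Bᵀ)`. -/
def finner {m k : Type*} [Fintype m] [Fintype k] (A B : Matrix m k ℝ) : ℝ :=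
  Matrix.trace (A * Bᵀ)

/-- Frobenius norm `‖A‖_F = √⟨A, A⟩`. -/
def fnorm {m k : Type*} [Fintype m] [Fintype k] (A : Matrix m k ℝ) : ℝ :=
  Real.sqrt (finner A A)

/-- Skew part of a square matrix, `skew(A) = (A − Aᵀ)/2`. -/
def mskew {m : Type*} [Fintype m] (A : Matrix m m ℝ) : Matrix m m ℝ :=
  (2 : ℝ)⁻¹ • (A - Aᵀ)

/-- Symmetric part of a square matrix, `sym(A) = (A + Aᵀ)/2`. -/
def msym {m : Type*} [Fintype m] (A : Matrix m m ℝ) : Matrix m m ℝ :=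
  (2 : ℝ)⁻¹ • (A + Aᵀ)

/-- Relative (Riemannian) gradient `grad f(x) = skew(∇f(x) xᵀ) x`, where `Df` denotes the
Euclidean gradient `∇f` of `f`. -/
def rgrad {d r : ℕ} (Df : Matrix (Fin d) (Fin r) ℝ → Matrix (Fin d) (Fin r) ℝ)
    (x : Matrix (Fin d) (Fin r) ℝ) : Matrix (Fin d) (Fin r) ℝ :=
  mskew (Df x * xᵀ) * x

/-- Landing field `Λ(x) = grad f(x) + λ x (xᵀ x − I_r)`. -/
def landing {d r : ℕ} (Df : Matrix (Fin d) (Fin r) ℝ → Matrix (Fin d) (Fin r) ℝ) (lam : ℝ)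
    (x : Matrix (Fin d) (Fin r) ℝ) : Matrix (Fin d) (Fin r) ℝ :=
  rgrad Df x + lam • (x * (xᵀ * x - 1))

/-- The Stiefel manifold `St(d,r) = {x : xᵀ x = I_r}`. -/
def St (d r : ℕ) : Set (Matrix (Fin d) (Fin r) ℝ) := {x | xᵀ * x = 1}

/-- The safety region `St(d,r)^ε = {x : ‖xᵀ x − I_r‖_F ≤ ε}`. -/
def StEps (d r : ℕ) (ε : ℝ) : Set (Matrix (Fin d) (Fin r) ℝ) :=
  {x | fnorm (xᵀ * x - 1) ≤ ε}

/-- The merit function `𝓛(x) = f(x) − ½⟨sym(xᵀ∇f(x)), xᵀx − I_r⟩ + γ·¼‖xᵀx − I_r‖_F²`. -/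
def merit {d r : ℕ} (f : Matrix (Fin d) (Fin r) ℝ → ℝ)
    (Df : Matrix (Fin d) (Fin r) ℝ → Matrix (Fin d) (Fin r) ℝ) (γ : ℝ)
    (x : Matrix (Fin d) (Fin r) ℝ) : ℝ :=
  f x - (2 : ℝ)⁻¹ * finner (msym (xᵀ * Df x)) (xᵀ * x - 1)
    + γ * (4 : ℝ)⁻¹ * fnorm (xᵀ * x - 1) ^ 2

/-- The gradient of the merit function at on-manifold points:
`∇𝓛(x) = ∇f(x) − x · sym(xᵀ∇f(x))` for `x ∈ St(d,r)`. -/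
def meritGradSt {d r : ℕ} (Df : Matrix (Fin d) (Fin r) ℝ → Matrix (Fin d) (Fin r) ℝ)
    (x : Matrix (Fin d) (Fin r) ℝ) : Matrix (Fin d) (Fin r) ℝ :=
  Df x - x * msym (xᵀ * Df x)

/-- `x'` is the polar factor of a full-column-rank `x`, i.e. the projection `Proj_St(x)` of `x`
onto the Stiefel manifold: if `x = U S Vᵀ` is a thin SVD then `x' = U Vᵀ`, equivalently
`x'ᵀ x' = I_r` and `x = x' P` for a positive definite `P` (namely `P = V S Vᵀ`). -/
def IsPolarFactor {d r : ℕ} (x x' : Matrix (Fin d) (Fin r) ℝ) : Prop :=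
  x'ᵀ * x' = 1 ∧ ∃ P : Matrix (Fin r) (Fin r) ℝ, P.PosDef ∧ x = x' * P

/-- Frobenius distance from `x` to a set `S`: `dist(S,x) = inf_{y ∈ S} ‖x − y‖_F`. -/
def fdist {d r : ℕ} (S : Set (Matrix (Fin d) (Fin r) ℝ)) (x : Matrix (Fin d) (Fin r) ℝ) : ℝ :=
  sInf ((fun y => fnorm (x - y)) '' S)

/-- Network average `z̄ = (1/n) Σᵢ zᵢ`. -/
def avg {n d r : ℕ} (z : Fin n → Matrix (Fin d) (Fin r) ℝ) : Matrix (Fin d) (Fin r) ℝ :=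
  (n : ℝ)⁻¹ • ∑ i, z i

/-- Frobenius norm of a stacked family: `‖𝐳‖_F = (Σᵢ ‖zᵢ‖_F²)^{1/2}`. -/
def snorm {n d r : ℕ} (z : Fin n → Matrix (Fin d) (Fin r) ℝ) : ℝ :=
  Real.sqrt (∑ i, fnorm (z i) ^ 2)



section AuxLemmas

variable {m k l : Type*} [Fintype m] [Fintype k] [Fintype l]

lemma finner_eq_sum (A B : Matrix m k ℝ) :
    finner A B = ∑ p : m × k, A p.1 p.2 * B p.1 p.2 := by
  rw [Fintype.sum_prod_type]
  simp [finner, Matrix.trace, Matrix.mul_apply, Matrix.diag]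

lemma finner_self_nonneg (A : Matrix m k ℝ) : 0 ≤ finner A A := by
  rw [finner_eq_sum]
  exact Finset.sum_nonneg fun _ _ => mul_self_nonneg _

lemma fnorm_nonneg (A : Matrix m k ℝ) : 0 ≤ fnorm A := Real.sqrt_nonneg _

lemma fnorm_sq (A : Matrix m k ℝ) : fnorm A ^ 2 = finner A A :=
  Real.sq_sqrt (finner_self_nonneg A)

lemma finner_le_fnorm_mul_fnorm (A B : Matrix m k ℝ) :
    finner A B ≤ fnorm A * fnorm B := by
  rw [finner_eq_sum, fnorm, fnorm, finner_eq_sum, finner_eq_sum]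
  simp_rw [← sq]
  exact Real.sum_mul_le_sqrt_mul_sqrt _ _ _

lemma fnorm_neg (A : Matrix m k ℝ) : fnorm (-A) = fnorm A := by
  unfold fnorm
  rw [finner_eq_sum, finner_eq_sum]
  simp

lemma abs_finner_le (A B : Matrix m k ℝ) : |finner A B| ≤ fnorm A * fnorm B := by
  rw [abs_le]
  refine ⟨?_, finner_le_fnorm_mul_fnorm A B⟩
  have h := finner_le_fnorm_mul_fnorm A (-B)
  have h2 : finner A (-B) = -finner A B := by
    rw [finner_eq_sum, finner_eq_sum, ← Finset.sum_neg_distrib]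
    simp
  rw [h2, fnorm_neg] at h
  linarith

lemma fnorm_mul_le (A : Matrix m k ℝ) (B : Matrix k l ℝ) :
    fnorm (A * B) ≤ fnorm A * fnorm B := by
  have h1 : finner (A * B) (A * B) ≤ finner A A * finner B B := by
    rw [finner_eq_sum, finner_eq_sum, finner_eq_sum]
    calc ∑ p : m × l, (A * B) p.1 p.2 * (A * B) p.1 p.2
        = ∑ p : m × l, (∑ s, A p.1 s * B s p.2) ^ 2 := by
          simp [Matrix.mul_apply, sq]
      _ ≤ ∑ p : m × l, (∑ s, (A p.1 s) ^ 2) * (∑ s, (B s p.2) ^ 2) :=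
          Finset.sum_le_sum fun p _ => Finset.sum_mul_sq_le_sq_mul_sq _ _ _
      _ = (∑ i, ∑ s, (A i s) ^ 2) * (∑ j, ∑ s, (B s j) ^ 2) := by
          rw [Fintype.sum_prod_type]
          dsimp only
          rw [← Finset.sum_mul_sum]
      _ = (∑ p : m × k, A p.1 p.2 * A p.1 p.2) * (∑ p : k × l, B p.1 p.2 * B p.1 p.2) := by
          rw [Fintype.sum_prod_type, Fintype.sum_prod_type]
          congr 1
          · simp [sq]
          · rw [Finset.sum_comm]
            simp [sq]
  have h2 : fnorm (A * B) = Real.sqrt (finner (A * B) (A * B)) := rfl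
  rw [h2]
  calc Real.sqrt (finner (A * B) (A * B)) ≤ Real.sqrt (finner A A * finner B B) :=
        Real.sqrt_le_sqrt h1
    _ = fnorm A * fnorm B := Real.sqrt_mul (finner_self_nonneg A) _

lemma trace_skew_mul_symm {S M : Matrix m m ℝ} (hS : Sᵀ = -S) (hM : Mᵀ = M) :
    Matrix.trace (S * M) = 0 := by
  have h : Matrix.trace (S * M) = -Matrix.trace (S * M) := by
    conv_lhs => rw [← Matrix.trace_transpose, Matrix.transpose_mul, hS, hM,
      Matrix.trace_mul_comm]
    simp
  linarith

end AuxLemmas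

/-- Let `ε ∈ (0,1)`, `λ > 0`, `f` differentiable with Euclidean gradient `Df`.
For every `x ∈ St(d,r)^ε`,
`‖Λ(x)‖_F² ≥ ‖grad f(x)‖_F² + λ²(1−ε)²‖xᵀx − I_r‖_F²`. -/
theorem landing_sq_lower_bound {d r : ℕ} (ε lam : ℝ)
    (hε : ε ∈ Set.Ioo (0 : ℝ) 1) (hlam : 0 < lam)
    (Df : Matrix (Fin d) (Fin r) ℝ → Matrix (Fin d) (Fin r) ℝ)
    (x : Matrix (Fin d) (Fin r) ℝ) (hx : x ∈ StEps d r ε) :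
    fnorm (landing Df lam x) ^ 2 ≥
      fnorm (rgrad Df x) ^ 2 + lam ^ 2 * (1 - ε) ^ 2 * fnorm (xᵀ * x - 1) ^ 2 := by
  obtain ⟨hε0, hε1⟩ := hε
  set N : Matrix (Fin r) (Fin r) ℝ := xᵀ * x - 1 with hN
  set g : Matrix (Fin d) (Fin r) ℝ := rgrad Df x with hg
  set y : Matrix (Fin d) (Fin r) ℝ := x * N with hy
  have hNT : Nᵀ = N := by
    rw [hN]; simp [Matrix.transpose_sub, Matrix.transpose_mul]
  -- orthogonality
  have horth : finner g y = 0 := by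
    have hST : (mskew (Df x * xᵀ))ᵀ = -(mskew (Df x * xᵀ)) := by
      unfold mskew
      rw [Matrix.transpose_smul, Matrix.transpose_sub, Matrix.transpose_transpose]
      rw [smul_sub, smul_sub]
      abel
    have hMT : (x * N * xᵀ)ᵀ = x * N * xᵀ := by
      rw [Matrix.transpose_mul, Matrix.transpose_mul, Matrix.transpose_transpose, hNT,
        Matrix.mul_assoc]
    have : finner g y = Matrix.trace (mskew (Df x * xᵀ) * (x * N * xᵀ)) := by
      rw [hg, hy, rgrad, finner, Matrix.transpose_mul, hNT]
      simp only [Matrix.mul_assoc]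
    rw [this, trace_skew_mul_symm hST hMT]
  -- expansion of the square
  have hexp : fnorm (landing Df lam x) ^ 2 =
      fnorm g ^ 2 + 2 * lam * finner g y + lam ^ 2 * finner y y := by
    rw [fnorm_sq, fnorm_sq, landing, ← hg, ← hN, ← hy]
    simp only [finner_eq_sum, Matrix.add_apply, Matrix.smul_apply, smul_eq_mul]
    rw [Finset.mul_sum, Finset.mul_sum, ← Finset.sum_add_distrib, ← Finset.sum_add_distrib]
    refine Finset.sum_congr rfl fun p _ => ?_
    ring
  -- lower bound on ‖x N‖²
  have hyy : finner y y ≥ (1 - ε) * fnorm N ^ 2 := by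
    have key : finner y y = Matrix.trace (N * N * N) + fnorm N ^ 2 := by
      have h1 : finner y y = Matrix.trace (N * Nᵀ * (xᵀ * x)) := by
        rw [finner, hy, Matrix.transpose_mul]
        rw [show x * N * (Nᵀ * xᵀ) = x * (N * (Nᵀ * xᵀ)) by simp only [Matrix.mul_assoc]]
        rw [Matrix.trace_mul_comm]
        simp only [Matrix.mul_assoc]
      have h2 : xᵀ * x = N + 1 := by rw [hN]; abel
      rw [h1, hNT, h2, Matrix.mul_add, Matrix.mul_one, Matrix.trace_add]
      congr 1
      rw [fnorm_sq, finner, hNT]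
    have htr : Matrix.trace (N * N * N) ≥ -(ε * fnorm N ^ 2) := by
      have e1 : Matrix.trace (N * N * N) = finner (N * N) N := by
        rw [finner, hNT]
      have h1 := abs_finner_le (N * N) N
      have h2 := fnorm_mul_le N N
      have h3 : fnorm N ≤ ε := hx
      have h4 := fnorm_nonneg N
      have h5 := fnorm_nonneg (N * N)
      rw [e1]
      have c0 := neg_abs_le (finner (N * N) N)
      have c1 : fnorm (N * N) * fnorm N ≤ fnorm N * fnorm N * fnorm N :=
        mul_le_mul_of_nonneg_right h2 h4
      have c2 : fnorm N * fnorm N * fnorm N ≤ fnorm N * fnorm N * ε :=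
        mul_le_mul_of_nonneg_left h3 (mul_nonneg h4 h4)
      have c3 : fnorm N ^ 2 = fnorm N * fnorm N := sq (fnorm N)
      linarith
    linarith
  have hN2 : 0 ≤ fnorm N ^ 2 := sq_nonneg _
  have hsq : (1 - ε) ^ 2 ≤ 1 - ε := by nlinarith
  rw [ge_iff_le, hexp, horth]
  have hlam2 : (0 : ℝ) ≤ lam ^ 2 := sq_nonneg _
  have s1 : (1 - ε) ^ 2 * fnorm N ^ 2 ≤ (1 - ε) * fnorm N ^ 2 :=
    mul_le_mul_of_nonneg_right hsq hN2
  have s2 : lam ^ 2 * ((1 - ε) ^ 2 * fnorm N ^ 2) ≤ lam ^ 2 * finner y y :=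
    mul_le_mul_of_nonneg_left (s1.trans hyy) hlam2
  rw [mul_assoc]
  linarith


end DRFGT
end
end

section
/- Let ε ∈ (0, 3/4), λ > 0, ρ > 0, L' > 0, n ≥ 1, α > 0, and C = 3L'/(λ(1−ε)) + 2. Let x_{i,k−1} ∈ ℝ^{d×r} for i ∈ [n], set x̄_{k−1} = (1/n)Σ_i x_{i,k−1}, ȳ_{k−1} = (1/n)Σ_i Λ_i(x_{i,k−1}), and x̄_k = x̄_{k−1} − α ȳ_{k−1}. Assume: each Λ_i is L'-Lipschitz (so ‖ȳ_{k−1} − Λ(x̄_{k−1})‖_F ≤ (L'/√n)‖𝐱_{k−1} − 𝐱̄_{k−1}‖_F); the descent inequality 𝓛(x̄_k) ≤ 𝓛(x̄_{k−1}) + ⟨∇𝓛(x̄_{k−1}), x̄_k − x̄_{k−1}⟩ + (L'/2)‖x̄_k − x̄_{k−1}‖_F²; ⟨Λ(x̄_{k−1}), ∇𝓛(x̄_{k−1})⟩ ≥ ρ‖Λ(x̄_{k−1})‖_F²; and ‖∇𝓛(x̄_{k−1})‖_F ≤ C‖Λ(x̄_{k−1})‖_F. Then 𝓛(x̄_k)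 − 𝓛(x̄_{k−1}) ≤ −(αρ/2)‖Λ(x̄_{k−1})‖_F² + (αC²L'²/(2ρn))‖𝐱̄_{k−1} − 𝐱_{k−1}‖_F² + (α²L'/2)‖ȳ_{k−1}‖_F². -/
open Matrix BigOperators Finset

noncomputable section

namespace DRFGT

/-!
The step is `x̄_k − x̄_{k−1} = −α ȳ`, so by the descent inequality everything reduces to a
lower bound on `⟨∇𝓛, ȳ⟩`. Write `ȳ = Λ(x̄) + e`. The part along `Λ(x̄)` contributes at least
`ρ‖Λ(x̄)‖²`. Since the global landing field is the average of the local ones, Lipschitz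
continuity and Cauchy–Schwarz give `‖e‖ ≤ (L'/√n)‖𝐱̄ − 𝐱‖`, and the cross term
`‖∇𝓛‖‖e‖ ≤ C‖Λ(x̄)‖‖e‖` is split by Young's inequality at the cost of half of `ρ‖Λ(x̄)‖²`.
-/

open scoped InnerProductSpace

def toEuclidean {m k : Type*} [Fintype m] [Fintype k] :
    Matrix m k ℝ →ₗ[ℝ] EuclideanSpace ℝ (m × k) where
  toFun A := WithLp.toLp 2 fun p => A p.1 p.2
  map_add' _ _ := rfl
  map_smul' _ _ := rfl

section Frobenius

variable {m k : Type*} [Fintype m] [Fintype k]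

theorem finner_eq_inner (A B : Matrix m k ℝ) :
    finner A B = ⟪toEuclidean A, toEuclidean B⟫_ℝ := by
  simp only [finner, Matrix.trace, Matrix.diag, Matrix.mul_apply, Matrix.transpose_apply,
    PiLp.inner_apply, RCLike.inner_apply, conj_trivial, Fintype.sum_prod_type, mul_comm]
  rfl

theorem fnorm_eq_norm (A : Matrix m k ℝ) : fnorm A = ‖toEuclidean A‖ := by
  rw [fnorm, finner_eq_inner, real_inner_self_eq_norm_sq, Real.sqrt_sq (norm_nonneg _)]

theorem fnorm_smul (c : ℝ) (A : Matrix m k ℝ) : fnorm (c • A) = |c| * fnorm A := by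
  rw [fnorm_eq_norm, fnorm_eq_norm, map_smul, norm_smul, Real.norm_eq_abs]

theorem fnorm_sub_comm (A B : Matrix m k ℝ) : fnorm (A - B) = fnorm (B - A) := by
  rw [fnorm_eq_norm, fnorm_eq_norm, map_sub, map_sub, norm_sub_rev]

theorem fnorm_sum_le {ι : Type*} (s : Finset ι) (A : ι → Matrix m k ℝ) :
    fnorm (∑ i ∈ s, A i) ≤ ∑ i ∈ s, fnorm (A i) := by
  simp only [fnorm_eq_norm, map_sum]
  exact norm_sum_le _ _

theorem finner_smul_right (c : ℝ) (A B : Matrix m k ℝ) :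
    finner A (c • B) = c * finner A B := by
  rw [finner_eq_inner, finner_eq_inner, map_smul, real_inner_smul_right]

end Frobenius

theorem inner_ge_of_norm_sub_le {E : Type*} [NormedAddCommGroup E] [InnerProductSpace ℝ E]
    {g v y : E} {ρ C t : ℝ} (hρ : 0 < ρ) (hv : ρ * ‖v‖ ^ 2 ≤ ⟪v, g⟫_ℝ)
    (hg : ‖g‖ ≤ C * ‖v‖) (hy : ‖y - v‖ ≤ t) :
    ρ / 2 * ‖v‖ ^ 2 - C ^ 2 * t ^ 2 / (2 * ρ) ≤ ⟪g, y⟫_ℝ := by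
  have hsplit : ⟪g, y⟫_ℝ = ⟪v, g⟫_ℝ + ⟪g, y - v⟫_ℝ := by
    rw [inner_sub_right, real_inner_comm g v]; ring
  have hcross : -(C * ‖v‖ * t) ≤ ⟪g, y - v⟫_ℝ :=
    calc -(C * ‖v‖ * t) ≤ -(‖g‖ * ‖y - v‖) :=
        neg_le_neg (mul_le_mul hg hy (norm_nonneg _) ((norm_nonneg g).trans hg))
      _ ≤ ⟪g, y - v⟫_ℝ := neg_le_of_abs_le (abs_real_inner_le_norm g (y - v))
  have hyoung : C * ‖v‖ * t ≤ ρ / 2 * ‖v‖ ^ 2 + C ^ 2 * t ^ 2 / (2 * ρ) := by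
    rw [← sub_nonneg]
    have : ρ / 2 * ‖v‖ ^ 2 + C ^ 2 * t ^ 2 / (2 * ρ) - C * ‖v‖ * t
        = (ρ * ‖v‖ - C * t) ^ 2 / (2 * ρ) := by
      field_simp; ring
    rw [this]; positivity
  linarith

theorem mskew_smul {m : Type*} [Fintype m] (c : ℝ) (A : Matrix m m ℝ) :
    mskew (c • A) = c • mskew A := by
  simp only [mskew, transpose_smul, ← smul_sub, smul_comm c]

theorem mskew_sum {m ι : Type*} [Fintype m] (s : Finset ι) (A : ι → Matrix m m ℝ) :
    mskew (∑ i ∈ s, A i) = ∑ i ∈ s, mskew (A i) := by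
  simp only [mskew, transpose_sum, ← Finset.sum_sub_distrib, Finset.smul_sum]

section Average

variable {n d r : ℕ}

theorem avg_sub (a b : Fin n → Matrix (Fin d) (Fin r) ℝ) :
    avg a - avg b = avg (a - b) := by
  simp only [avg, Pi.sub_apply, Finset.sum_sub_distrib, smul_sub]

theorem fnorm_avg_le (z : Fin n → Matrix (Fin d) (Fin r) ℝ) :
    fnorm (avg z) ≤ (n : ℝ)⁻¹ * ∑ i, fnorm (z i) := by
  rw [avg, fnorm_smul, abs_of_nonneg (by positivity)]
  gcongr
  exact fnorm_sum_le _ _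

theorem sum_fnorm_le_sqrt_mul_snorm (z : Fin n → Matrix (Fin d) (Fin r) ℝ) :
    ∑ i, fnorm (z i) ≤ Real.sqrt n * snorm z := by
  simpa [snorm] using
    Real.sum_mul_le_sqrt_mul_sqrt Finset.univ (fun _ ↦ (1 : ℝ)) (fun i ↦ fnorm (z i))

theorem fnorm_avg_sub_avg_le
    {F : Fin n → Matrix (Fin d) (Fin r) ℝ → Matrix (Fin d) (Fin r) ℝ} {L : ℝ} (hL : 0 ≤ L)
    (hF : ∀ i, ∀ u v, fnorm (F i u - F i v) ≤ L * fnorm (u - v))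
    (x : Fin n → Matrix (Fin d) (Fin r) ℝ) (c : Matrix (Fin d) (Fin r) ℝ) :
    fnorm (avg (fun i ↦ F i (x i)) - avg (fun i ↦ F i c)) ≤
      L / Real.sqrt n * snorm (fun i ↦ c - x i) :=
  calc fnorm (avg (fun i ↦ F i (x i)) - avg (fun i ↦ F i c))
      ≤ (n : ℝ)⁻¹ * ∑ i, fnorm (F i (x i) - F i c) := by
        rw [avg_sub]; exact fnorm_avg_le _
    _ ≤ (n : ℝ)⁻¹ * ∑ i, L * fnorm (c - x i) := by
        gcongr with i
        rw [fnorm_sub_comm c]; exact hF i _ _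
    _ ≤ (n : ℝ)⁻¹ * (L * (Real.sqrt n * snorm (fun i ↦ c - x i))) := by
        rw [← Finset.mul_sum]; gcongr; exact sum_fnorm_le_sqrt_mul_snorm _
    _ = L / Real.sqrt n * snorm (fun i ↦ c - x i) := by
        have hsqrt : (n : ℝ)⁻¹ * Real.sqrt n = (Real.sqrt n)⁻¹ := by
          rw [← div_eq_inv_mul, Real.sqrt_div_self', one_div]
        rw [div_eq_mul_inv, ← hsqrt]; ring

theorem landing_avg_eq_avg_landing (hn : 0 < n)
    (Dfi : Fin n → Matrix (Fin d) (Fin r) ℝ → Matrix (Fin d) (Fin r) ℝ) (lam : ℝ)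
    (x : Matrix (Fin d) (Fin r) ℝ) :
    landing (fun z ↦ avg (Dfi · z)) lam x = avg (fun i ↦ landing (Dfi i) lam x) := by
  have hpen :
      lam • (x * (xᵀ * x - 1)) = (n : ℝ)⁻¹ • ∑ _i : Fin n, lam • (x * (xᵀ * x - 1)) := by
    rw [Finset.sum_const, Finset.card_univ, Fintype.card_fin, ← Nat.cast_smul_eq_nsmul ℝ,
      smul_smul, inv_mul_cancel₀ (Nat.cast_ne_zero.mpr hn.ne'), one_smul]
  simp only [avg, landing, rgrad, Matrix.smul_mul, Matrix.sum_mul, mskew_smul, mskew_sum,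
    Finset.sum_add_distrib, smul_add, ← hpen]

end Average

/-- `Dfi i` is the Euclidean gradient `∇fᵢ` of the `i`-th local objective and `gL` stands for
`∇𝓛(x̄_{k−1})`. -/
theorem merit_one_step_descent_general {n d r : ℕ} (hn : 0 < n) (ε lam ρ L' α γ : ℝ)
    (hρ : 0 < ρ) (hL' : 0 < L')
    (hα : 0 < α)
    (Dfi : Fin n → Matrix (Fin d) (Fin r) ℝ → Matrix (Fin d) (Fin r) ℝ)
    (xp : Fin n → Matrix (Fin d) (Fin r) ℝ)
    (gL : Matrix (Fin d) (Fin r) ℝ)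
    (hLip : ∀ i, ∀ u v : Matrix (Fin d) (Fin r) ℝ,
      fnorm (landing (Dfi i) lam u - landing (Dfi i) lam v) ≤ L' * fnorm (u - v))
    -- abbreviations: global objective/gradient, landing field, previous/next averages
    (f : Matrix (Fin d) (Fin r) ℝ → ℝ)
    (Df : Matrix (Fin d) (Fin r) ℝ → Matrix (Fin d) (Fin r) ℝ)
    (hDf : Df = fun z => (n : ℝ)⁻¹ • ∑ i, Dfi i z)
    (ybar : Matrix (Fin d) (Fin r) ℝ) (hybar : ybar = avg (fun i => landing (Dfi i) lam (xp i)))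
    (xbarNext : Matrix (Fin d) (Fin r) ℝ) (hxbarNext : xbarNext = avg xp - α • ybar)
    -- hypotheses: descent inequality, merit/landing compatibility, gradient comparison
    (hdescent : merit f Df γ xbarNext ≤ merit f Df γ (avg xp)
      + finner gL (xbarNext - avg xp) + L' / 2 * fnorm (xbarNext - avg xp) ^ 2)
    (hprop : finner (landing Df lam (avg xp)) gL ≥ ρ * fnorm (landing Df lam (avg xp)) ^ 2)
    (hC : fnorm gL ≤ (3 * L' / (lam * (1 - ε)) + 2) * fnorm (landing Df lam (avg xp))) :
    merit f Df γ xbarNext - merit f Df γ (avg xp) ≤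
      -(α * ρ / 2) * fnorm (landing Df lam (avg xp)) ^ 2
        + α * (3 * L' / (lam * (1 - ε)) + 2) ^ 2 * L' ^ 2 / (2 * ρ * n)
          * snorm (fun i => avg xp - xp i) ^ 2
        + α ^ 2 * L' / 2 * fnorm ybar ^ 2 := by
  set C := 3 * L' / (lam * (1 - ε)) + 2
  set s := snorm (fun i => avg xp - xp i)
  have hΛ : landing Df lam (avg xp) = avg (fun i => landing (Dfi i) lam (avg xp)) := by
    rw [hDf]
    exact landing_avg_eq_avg_landing hn Dfi lam (avg xp)
  set Λ := landing Df lam (avg xp)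
  have hconsensus : fnorm (ybar - Λ) ≤ L' / Real.sqrt n * s := by
    rw [hybar, hΛ]
    exact fnorm_avg_sub_avg_le hL'.le hLip xp (avg xp)
  have hinner :
      ρ / 2 * fnorm Λ ^ 2 - C ^ 2 * (L' / Real.sqrt n * s) ^ 2 / (2 * ρ) ≤ finner gL ybar := by
    simp only [finner_eq_inner, fnorm_eq_norm, map_sub] at hprop hC hconsensus ⊢
    exact inner_ge_of_norm_sub_le hρ hprop hC hconsensus
  have hstep : xbarNext - avg xp = (-α) • ybar := by
    rw [hxbarNext, neg_smul, sub_sub_cancel_left]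
  rw [hstep, finner_smul_right, fnorm_smul, abs_neg, abs_of_pos hα] at hdescent
  have hsq : (L' / Real.sqrt n * s) ^ 2 = L' ^ 2 * s ^ 2 / n := by
    rw [mul_pow, div_pow, Real.sq_sqrt (Nat.cast_nonneg n)]; ring
  rw [hsq] at hinner
  calc merit f Df γ xbarNext - merit f Df γ (avg xp)
      ≤ -α * finner gL ybar + L' / 2 * (α * fnorm ybar) ^ 2 := by linarith
    _ ≤ -α * (ρ / 2 * fnorm Λ ^ 2 - C ^ 2 * (L' ^ 2 * s ^ 2 / n) / (2 * ρ))
        + L' / 2 * (α * fnorm ybar) ^ 2 := by linarith [mul_le_mul_of_nonneg_left hinner hα.le]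
    _ = _ := by ring

/-- one-step descent of the merit function, Lemma 5 of the paper.
Here `fi i`/`Dfi i` are the local objectives and their Euclidean gradients, the global objective
is `f = (1/n)Σᵢ fᵢ` with gradient `Df = (1/n)Σᵢ ∇fᵢ`, `gL` denotes the merit-function gradient
`∇𝓛(x̄_{k−1})`, `ȳ_{k−1} = (1/n)Σᵢ Λᵢ(x_{i,k−1})`, and `x̄_k = x̄_{k−1} − α ȳ_{k−1}`. -/
theorem merit_one_step_descent {n d r : ℕ} (hn : 0 < n) (ε lam ρ L' α γ : ℝ)
    (hε : ε ∈ Set.Ioo (0 : ℝ) (3 / 4)) (hlam : 0 < lam) (hρ : 0 < ρ) (hL' : 0 < L')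
    (hα : 0 < α)
    (fi : Fin n → Matrix (Fin d) (Fin r) ℝ → ℝ)
    (Dfi : Fin n → Matrix (Fin d) (Fin r) ℝ → Matrix (Fin d) (Fin r) ℝ)
    (xp : Fin n → Matrix (Fin d) (Fin r) ℝ)
    (gL : Matrix (Fin d) (Fin r) ℝ)
    (hLip : ∀ i, ∀ u v : Matrix (Fin d) (Fin r) ℝ,
      fnorm (landing (Dfi i) lam u - landing (Dfi i) lam v) ≤ L' * fnorm (u - v))
    -- abbreviations: global objective/gradient, landing field, previous/next averages
    (f : Matrix (Fin d) (Fin r) ℝ → ℝ) (hf : f = fun z => (n : ℝ)⁻¹ * ∑ i, fi i z)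
    (Df : Matrix (Fin d) (Fin r) ℝ → Matrix (Fin d) (Fin r) ℝ)
    (hDf : Df = fun z => (n : ℝ)⁻¹ • ∑ i, Dfi i z)
    (ybar : Matrix (Fin d) (Fin r) ℝ) (hybar : ybar = avg (fun i => landing (Dfi i) lam (xp i)))
    (xbarNext : Matrix (Fin d) (Fin r) ℝ) (hxbarNext : xbarNext = avg xp - α • ybar)
    -- hypotheses: descent inequality, merit/landing compatibility, gradient comparison
    (hdescent : merit f Df γ xbarNext ≤ merit f Df γ (avg xp)
      + finner gL (xbarNext - avg xp) + L' / 2 * fnorm (xbarNext - avg xp) ^ 2)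
    (hprop : finner (landing Df lam (avg xp)) gL ≥ ρ * fnorm (landing Df lam (avg xp)) ^ 2)
    (hC : fnorm gL ≤ (3 * L' / (lam * (1 - ε)) + 2) * fnorm (landing Df lam (avg xp))) :
    merit f Df γ xbarNext - merit f Df γ (avg xp) ≤
      -(α * ρ / 2) * fnorm (landing Df lam (avg xp)) ^ 2
        + α * (3 * L' / (lam * (1 - ε)) + 2) ^ 2 * L' ^ 2 / (2 * ρ * n)
          * snorm (fun i => avg xp - xp i) ^ 2
        + α ^ 2 * L' / 2 * fnorm ybar ^ 2 :=
  merit_one_step_descent_general hn ε lam ρ L' α γ hρ hL' hα Dfi xp gL hLip f Df hDf ybar hybar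
    xbarNext hxbarNext hdescent hprop hC

end DRFGT
end
end
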